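/- The Guthrie-Nymann set X has Lebesgue measure 1. -/

import Mathlib

/-!
`GN` is the attractor of the similarities `x ↦ (x + d) / 4`, `d ∈ {0, 2, 3, 5}`, lies in `[0, 5/3]`
and is invariant under `x ↦ 5/3 - x`. It contains `[2/3, 1]`: expanding by `x ↦ 4x - d`, possibly
after reflecting, sends every point of `[2/3, 1]`, and one point of every pair `{t, 2/3 - t}` in
`[0, 2/3]`, to a configuration of the same kind, so the distance of these points to `GN` is bounded
by a quarter of any common bound, hence vanishes. With `a = |GN ∩ (-∞, 2/3]|`, the reflection gives
`|GN| = 2a + 1/3`, and `GN ∩ (-∞, 2/3]` is the disjoint union of `GN / 4` and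
`(GN ∩ (-∞, 2/3] + 2) / 4`, so `a = |GN|/4 + a/4`. Hence `|GN| = 1`.
-/

open MeasureTheory

/-- The Guthrie-Nymann set. -/
def GN : Set ℝ :=
  {x | ∃ α : ℕ → ℝ, (∀ n, α n ∈ ({0, 2, 3, 5} : Set ℝ)) ∧
    HasSum (fun n => α n / 4 ^ (n + 1)) x}

open Set Metric

lemma mem_Icc_of_mem_digits {d : ℝ} (hd : d ∈ ({0, 2, 3, 5} : Set ℝ)) : d ∈ Icc 0 5 := by
  rcases hd with rfl | rfl | rfl | rfl <;> norm_num

lemma hasSum_five_div_four_pow : HasSum (fun n : ℕ => (5 : ℝ) / 4 ^ (n + 1)) (5 / 3) := by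
  have h := (hasSum_geometric_of_lt_one (by norm_num : (0 : ℝ) ≤ 4⁻¹) (by norm_num)).mul_left
    (5 / 4)
  rw [show (5 / 3 : ℝ) = 5 / 4 * (1 - 4⁻¹)⁻¹ by norm_num]
  exact h.congr_fun fun n => by rw [pow_succ, inv_pow]; field_simp

lemma summable_digits_div_four_pow {α : ℕ → ℝ} (hα : ∀ n, α n ∈ ({0, 2, 3, 5} : Set ℝ)) :
    Summable (fun n => α n / 4 ^ (n + 1)) :=
  hasSum_five_div_four_pow.summable.of_nonneg_of_le
    (fun n => div_nonneg (mem_Icc_of_mem_digits (hα n)).1 (by positivity))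
    (fun n => by gcongr; exact (mem_Icc_of_mem_digits (hα n)).2)

lemma zero_mem_GN : (0 : ℝ) ∈ GN :=
  ⟨0, fun _ => by simp, by simp⟩

lemma GN_subset_Icc : GN ⊆ Icc 0 (5 / 3) := by
  rintro x ⟨α, hα, hx⟩
  exact ⟨hasSum_le (fun n => div_nonneg (mem_Icc_of_mem_digits (hα n)).1 (by positivity))
      hasSum_zero hx,
    hasSum_le (fun n => by gcongr; exact (mem_Icc_of_mem_digits (hα n)).2) hx
      hasSum_five_div_four_pow⟩

lemma GN_eq_range :
    GN = range fun α : ℕ → ({0, 2, 3, 5} : Set ℝ) => ∑' n, (α n : ℝ) / 4 ^ (n + 1) := by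
  ext x
  constructor
  · rintro ⟨α, hα, hx⟩
    exact ⟨fun n => ⟨α n, hα n⟩, hx.tsum_eq⟩
  · rintro ⟨α, rfl⟩
    exact ⟨_, fun n => (α n).2, (summable_digits_div_four_pow fun n => (α n).2).hasSum⟩

lemma isCompact_GN : IsCompact GN := by
  rw [GN_eq_range]
  refine isCompact_range <|
    continuous_tsum (fun n => ?_) hasSum_five_div_four_pow.summable fun n α => ?_
  · fun_prop
  · obtain ⟨h₀, h₅⟩ := mem_Icc_of_mem_digits (α n).2
    rw [Real.norm_eq_abs, abs_of_nonneg (div_nonneg h₀ (by positivity))]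
    gcongr

lemma quarter_add_mem_GN {d x : ℝ} (hd : d ∈ ({0, 2, 3, 5} : Set ℝ)) (hx : x ∈ GN) :
    (x + d) / 4 ∈ GN := by
  obtain ⟨α, hα, hsum⟩ := hx
  refine ⟨fun n => Nat.casesOn n d α, fun n => by cases n <;> simp [hd, hα], ?_⟩
  rw [← hasSum_nat_add_iff' 1, Finset.sum_range_one]
  show HasSum (fun n => α n / 4 ^ (n + 1 + 1)) ((x + d) / 4 - d / 4 ^ (0 + 1))
  rw [show (x + d) / 4 - d / 4 ^ (0 + 1) = x / 4 by ring]
  exact (hsum.div_const 4).congr_fun fun n => by simp only [pow_succ]; ring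

lemma exists_eq_quarter_add_of_mem_GN {x : ℝ} (hx : x ∈ GN) :
    ∃ d ∈ ({0, 2, 3, 5} : Set ℝ), ∃ y ∈ GN, x = (y + d) / 4 := by
  obtain ⟨α, hα, hsum⟩ := hx
  refine ⟨α 0, hα 0, 4 * x - α 0, ⟨fun n => α (n + 1), fun n => hα (n + 1), ?_⟩, by ring⟩
  have h := ((hasSum_nat_add_iff' 1).2 hsum).mul_right 4
  rw [Finset.sum_range_one, show (x - α 0 / 4 ^ (0 + 1)) * 4 = 4 * x - α 0 by ring] at h
  exact h.congr_fun fun n => by simp only [pow_succ]; ring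

lemma five_thirds_sub_mem_GN {x : ℝ} (hx : x ∈ GN) : 5 / 3 - x ∈ GN := by
  obtain ⟨α, hα, hsum⟩ := hx
  refine ⟨fun n => 5 - α n, fun n => ?_, ?_⟩
  · obtain h | h | h | h : α n = 0 ∨ α n = 2 ∨ α n = 3 ∨ α n = 5 := hα n
    all_goals norm_num [h]
  · exact (hasSum_five_div_four_pow.sub hsum).congr_fun fun n => by ring

lemma five_thirds_sub_image_GN : (fun x : ℝ => 5 / 3 - x) '' GN = GN :=
  Subset.antisymm (image_subset_iff.2 fun _ => five_thirds_sub_mem_GN)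
    fun x hx => ⟨5 / 3 - x, five_thirds_sub_mem_GN hx, sub_sub_cancel _ _⟩

lemma infDist_five_thirds_sub_GN (x : ℝ) : infDist (5 / 3 - x) GN = infDist x GN := by
  conv_lhs => rw [← five_thirds_sub_image_GN]
  exact infDist_image (IsometryEquiv.subLeft (5 / 3 : ℝ)).isometry

lemma infDist_GN_le_of_four_mul_eq {d u x : ℝ} (hd : d ∈ ({0, 2, 3, 5} : Set ℝ))
    (hu : 4 * u = x + d) : infDist u GN ≤ infDist x GN / 4 := by
  obtain ⟨y, hy, hxy⟩ := isCompact_GN.exists_infDist_eq_dist ⟨0, zero_mem_GN⟩ x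
  calc infDist u GN ≤ dist u ((y + d) / 4) := infDist_le_dist_of_mem (quarter_add_mem_GN hd hy)
    _ = infDist x GN / 4 := by
      rw [hxy, Real.dist_eq, Real.dist_eq, show u = (x + d) / 4 by linarith, ← sub_div,
        abs_div, abs_of_pos (by norm_num : (0 : ℝ) < 4)]
      ring_nf

/-- Only one of `t`, `2/3 - t` is required to be close to `GN`: the reflection `x ↦ 5/3 - x`
exchanges the two after expanding by `x ↦ 4x - d`, which is what makes `ApproxGN.div_four` work. -/
def ApproxGN (ε : ℝ) : Prop :=
  (∀ u ∈ Icc (2 / 3 : ℝ) 1, infDist u GN ≤ ε) ∧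
    ∀ t ∈ Icc (0 : ℝ) (2 / 3), infDist t GN ≤ ε ∨ infDist (2 / 3 - t) GN ≤ ε

lemma ApproxGN.div_four {ε : ℝ} (h : ApproxGN ε) : ApproxGN (ε / 4) := by
  obtain ⟨hP, hD⟩ := h
  have step : ∀ {d u x : ℝ}, d ∈ ({0, 2, 3, 5} : Set ℝ) → 4 * u = x + d →
      infDist x GN ≤ ε → infDist u GN ≤ ε / 4 := fun hd hu hx =>
    (infDist_GN_le_of_four_mul_eq hd hu).trans (by linarith)
  have step' : ∀ {d u x : ℝ}, d ∈ ({0, 2, 3, 5} : Set ℝ) → 4 * u = 5 / 3 - x + d →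
      infDist x GN ≤ ε → infDist u GN ≤ ε / 4 := fun hd hu hx =>
    step hd hu (by rwa [infDist_five_thirds_sub_GN])
  constructor
  · rintro u ⟨hu₀, hu₁⟩
    rcases le_total u (3 / 4) with h₁ | h₁
    · exact step (d := 2) (by norm_num) (by ring) (hP (4 * u - 2) ⟨by linarith, by linarith⟩)
    rcases le_total (11 / 12) u with h₂ | h₂
    · exact step (d := 3) (by norm_num) (by ring) (hP (4 * u - 3) ⟨by linarith, by linarith⟩)
    rcases hD (4 * u - 3) ⟨by linarith, by linarith⟩ with h | h
    · exact step (d := 3) (by norm_num) (by ring) h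
    · exact step' (d := 2) (by norm_num) (by ring) h
  · rintro t ⟨ht₀, ht₁⟩
    rcases le_total t (1 / 6) with h₁ | h₁
    · rcases hD (4 * t) ⟨by linarith, by linarith⟩ with h | h
      · exact .inl (step (d := 0) (by norm_num) (by ring) h)
      · exact .inr (step (d := 2) (by norm_num) (by ring) h)
    rcases le_total t (1 / 4) with h₂ | h₂
    · exact .inl (step (d := 0) (by norm_num) (by ring) (hP (4 * t) ⟨by linarith, by linarith⟩))
    rcases le_total t (5 / 12) with h₃ | h₃
    · rcases hD (4 * t - 1) ⟨by linarith, by linarith⟩ with h | h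
      · exact .inr (step' (d := 0) (by norm_num) (by ring) h)
      · exact .inl (step' (d := 0) (by norm_num) (by ring) h)
    rcases le_total t (1 / 2) with h₄ | h₄
    · exact .inr <|
        step (d := 0) (by norm_num) (by ring) (hP (8 / 3 - 4 * t) ⟨by linarith, by linarith⟩)
    · rcases hD (4 * t - 2) ⟨by linarith, by linarith⟩ with h | h
      · exact .inl (step (d := 2) (by norm_num) (by ring) h)
      · exact .inr (step (d := 0) (by norm_num) (by ring) h)

lemma approxGN_five_thirds : ApproxGN (5 / 3) := by
  have h : ∀ x ∈ Icc (0 : ℝ) 1, infDist x GN ≤ 5 / 3 := fun x hx =>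
    (infDist_le_dist_of_mem zero_mem_GN).trans <| by
      rw [Real.dist_eq, sub_zero, abs_of_nonneg hx.1]; linarith [hx.2]
  exact ⟨fun u hu => h u ⟨by linarith [hu.1], hu.2⟩,
    fun t ht => .inl (h t ⟨ht.1, by linarith [ht.2]⟩)⟩

lemma Icc_subset_GN : Icc (2 / 3 : ℝ) 1 ⊆ GN := by
  intro u hu
  have hε : ∀ n : ℕ, infDist u GN ≤ 5 / 3 * (4⁻¹) ^ n := by
    intro n
    suffices ApproxGN (5 / 3 * (4⁻¹) ^ n) from this.1 u hu
    induction n with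
    | zero => simpa using approxGN_five_thirds
    | succ n ih => simpa [pow_succ, div_eq_mul_inv, mul_assoc] using ih.div_four
  have hlim := (tendsto_pow_atTop_nhds_zero_of_lt_one (by norm_num : (0 : ℝ) ≤ 4⁻¹)
    (by norm_num)).const_mul (5 / 3)
  rw [mul_zero] at hlim
  rw [isCompact_GN.isClosed.mem_iff_infDist_zero ⟨0, zero_mem_GN⟩]
  exact le_antisymm (ge_of_tendsto' hlim hε) infDist_nonneg

lemma volume_image_quarter_add (d : ℝ) (s : Set ℝ) :
    volume ((fun y => (y + d) / 4) '' s) = volume s / 4 := by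
  have h : (fun y : ℝ => (y + d) / 4) = AffineMap.homothety (d / 3) (4⁻¹ : ℝ) := by
    ext y; simp [AffineMap.homothety_apply]; ring
  rw [h, Measure.addHaar_image_homothety]
  simp [ENNReal.ofReal_inv_of_pos, ENNReal.div_eq_inv_mul]

lemma volume_image_const_sub (c : ℝ) (s : Set ℝ) :
    volume ((fun x => c - x) '' s) = volume s := by
  have h : (fun x : ℝ => c - x) = AffineMap.homothety (c / 2) (-1 : ℝ) := by
    ext y; simp [AffineMap.homothety_apply]; ring
  rw [h, Measure.addHaar_image_homothety]
  simp

lemma GN_inter_Iic_eq :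
    GN ∩ Iic (2 / 3) =
      (fun y => y / 4) '' GN ∪ (fun y => (y + 2) / 4) '' (GN ∩ Iic (2 / 3)) := by
  ext x
  constructor
  · rintro ⟨hx, hx₂⟩
    obtain ⟨d, hd, y, hy, rfl⟩ := exists_eq_quarter_add_of_mem_GN hx
    obtain ⟨hy₀, -⟩ := GN_subset_Icc hy
    rcases hd with rfl | rfl | rfl | rfl
    · exact .inl ⟨y, hy, by simp⟩
    · exact .inr ⟨y, ⟨hy, by simp only [mem_Iic] at hx₂ ⊢; linarith⟩, rfl⟩
    all_goals simp only [mem_Iic] at hx₂; linarith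
  · rintro (⟨y, hy, rfl⟩ | ⟨y, ⟨hy, hy₂⟩, rfl⟩)
    · refine ⟨by simpa using quarter_add_mem_GN (d := 0) (by simp) hy, ?_⟩
      simp only [mem_Iic]; linarith [(GN_subset_Icc hy).2]
    · exact ⟨quarter_add_mem_GN (by simp) hy, by simp only [mem_Iic] at hy₂ ⊢; linarith⟩

lemma volume_GN_inter_Iic :
    volume (GN ∩ Iic (2 / 3)) = volume GN / 4 + volume (GN ∩ Iic (2 / 3)) / 4 := by
  have hdisj :
      Disjoint ((fun y => y / 4) '' GN) ((fun y => (y + 2) / 4) '' (GN ∩ Iic (2 / 3))) := by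
    rw [disjoint_left]
    rintro _ ⟨x, hx, rfl⟩ ⟨y, ⟨hy, -⟩, hxy⟩
    linarith [(GN_subset_Icc hx).2, (GN_subset_Icc hy).1]
  have hmeas : MeasurableSet ((fun y => (y + 2) / 4) '' (GN ∩ Iic (2 / 3))) :=
    ((isCompact_GN.inter_right isClosed_Iic).image (by fun_prop)).isClosed.measurableSet
  have hGN : volume ((fun y => y / 4) '' GN) = volume GN / 4 := by
    simpa using volume_image_quarter_add 0 GN
  conv_lhs => rw [GN_inter_Iic_eq, measure_union hdisj hmeas, volume_image_quarter_add, hGN]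

lemma GN_inter_Ici_eq : GN ∩ Ici 1 = (fun x => 5 / 3 - x) '' (GN ∩ Iic (2 / 3)) := by
  have hinv : Function.Involutive fun x : ℝ => 5 / 3 - x := sub_sub_cancel _
  rw [hinv.image_eq_preimage_symm]
  ext x
  simp only [mem_inter_iff, mem_Ici, mem_preimage, mem_Iic]
  constructor
  · exact fun ⟨hx, hx₁⟩ => ⟨five_thirds_sub_mem_GN hx, by linarith⟩
  · exact fun ⟨hx, hx₁⟩ => ⟨by simpa using five_thirds_sub_mem_GN hx, by linarith⟩

lemma volume_GN_eq :
    volume GN =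
      volume (GN ∩ Iic (2 / 3)) + (ENNReal.ofReal (1 / 3) + volume (GN ∩ Iic (2 / 3))) := by
  have hsplit : GN \ Iic (2 / 3) = Ioo (2 / 3) 1 ∪ GN ∩ Ici 1 := by
    ext x
    simp only [mem_sdiff, mem_Iic, not_le, mem_union, mem_Ioo, mem_inter_iff, mem_Ici]
    constructor
    · rintro ⟨hx, hx₂⟩
      rcases lt_or_ge x 1 with h | h
      exacts [.inl ⟨hx₂, h⟩, .inr ⟨hx, h⟩]
    · rintro (⟨hx₂, hx₁⟩ | ⟨hx, hx₁⟩)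
      exacts [⟨Icc_subset_GN ⟨hx₂.le, hx₁.le⟩, hx₂⟩, ⟨hx, by linarith⟩]
  have hdisj : Disjoint (Ioo (2 / 3 : ℝ) 1) (GN ∩ Ici 1) :=
    disjoint_left.2 fun x hx hx' => hx.2.not_ge hx'.2
  rw [← measure_inter_add_sdiff GN measurableSet_Iic, hsplit,
    measure_union hdisj (isCompact_GN.isClosed.measurableSet.inter measurableSet_Ici),
    Real.volume_Ioo, GN_inter_Ici_eq, volume_image_const_sub]
  norm_num

theorem GN_volume_eq_one : volume GN = 1 := by
  have hμ : volume GN ≠ ⊤ := isCompact_GN.measure_lt_top.ne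
  have ha : volume (GN ∩ Iic (2 / 3)) ≠ ⊤ :=
    ne_top_of_le_ne_top hμ (measure_mono inter_subset_left)
  have h₁ := congrArg ENNReal.toReal volume_GN_eq
  have h₂ := congrArg ENNReal.toReal volume_GN_inter_Iic
  rw [ENNReal.toReal_add ha (ENNReal.add_ne_top.2 ⟨ENNReal.ofReal_ne_top, ha⟩),
    ENNReal.toReal_add ENNReal.ofReal_ne_top ha, ENNReal.toReal_ofReal (by norm_num)] at h₁
  rw [ENNReal.toReal_add (ENNReal.div_ne_top hμ four_ne_zero) (ENNReal.div_ne_top ha four_ne_zero),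
    ENNReal.toReal_div, ENNReal.toReal_div, ENNReal.toReal_ofNat] at h₂
  rw [← ENNReal.ofReal_toReal hμ, show (volume GN).toReal = 1 by linarith, ENNReal.ofReal_one]
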